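/- arXiv:2204.04111 — 4 statements merged into one kernel-verified Lean document; each statement's English description precedes it below -/
import Mathlib

section
/- Let T be a tree, let K be a group acting on T by isometries with no global fixed point, and let g be an isometry of T whose fixed point set F is a nonempty subtree of diameter at most 1 (a vertex or an edge). Suppose h in K acts loxodromically with axis L, and g fixes exactly F. If L is disjoint from F, then L and g(L) are disjoint, and the geodesic bridge between L and g(L) meets F. Consequently, if both g and h lie in a common group K' whose minimal invariant subtree is T', then T' intersects F. -/
def IsSubtree {V : Type*} (T : SimpleGraph V) (S : Set V) : Prop :=
  S.Nonempty ∧ ∀ ⦃u v : V⦄, u ∈ S → v ∈ S →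
    ∀ (p : T.Walk u v), p.IsPath → ∀ w ∈ p.support, w ∈ S

def IsLox {V K : Type*} [Group K] [MulAction K V] (T : SimpleGraph V) (g : K) : Prop :=
  (∀ v : V, g • v ≠ v) ∧ (∀ u v : V, T.Adj u v → g • u = v → g • v ≠ u)

def axisSet {V K : Type*} [Group K] [MulAction K V] (T : SimpleGraph V) (g : K) : Set V :=
  {v | ∀ w : V, T.dist v (g • v) ≤ T.dist w (g • w)}

set_option linter.unusedSectionVars false
set_option linter.unusedVariables false

open SimpleGraph Walk Function

set_option linter.unusedSectionVars false

namespace Stmt2Aux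

variable {V : Type*} [DecidableEq V] {T : SimpleGraph V}

noncomputable def geo (hT : T.IsTree) (u v : V) : T.Walk u v :=
  ((hT.isConnected.preconnected u v).some).bypass

variable (hT : T.IsTree) {u v x y z : V}
include hT

lemma geo_isPath (u v : V) : (geo hT u v).IsPath := Walk.bypass_isPath _

lemma path_eq_geo (p : T.Walk u v) (hp : p.IsPath) : p = geo hT u v :=
  congrArg Subtype.val
    (hT.IsAcyclic.path_unique ⟨p, hp⟩ ⟨geo hT u v, geo_isPath hT u v⟩)

lemma path_support_subset (p : T.Walk u v) (hp : p.IsPath) (W : T.Walk u v) :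
    p.support ⊆ W.support := by
  rw [path_eq_geo hT p hp, ← path_eq_geo hT W.bypass (Walk.bypass_isPath W)]
  exact Walk.support_bypass_subset W

lemma length_eq_dist (p : T.Walk u v) (hp : p.IsPath) : p.length = T.dist u v := by
  refine le_antisymm ?_ (SimpleGraph.dist_le p)
  obtain ⟨W, hW⟩ := hT.isConnected.exists_walk_length_eq_dist u v
  calc p.length = W.bypass.length := by
        rw [path_eq_geo hT p hp, ← path_eq_geo hT W.bypass W.bypass_isPath]
    _ ≤ W.length := Walk.length_bypass_le W
    _ = T.dist u v := hW

lemma dist_add_of_mem (p : T.Walk u v) (hp : p.IsPath) (hx : x ∈ p.support) :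
    T.dist u x + T.dist x v = T.dist u v := by
  have h1 : (p.takeUntil x hx).IsPath := hp.takeUntil hx
  have h2 : (p.dropUntil x hx).IsPath := hp.dropUntil hx
  have h3 := congrArg Walk.length (p.take_spec hx)
  rw [Walk.length_append] at h3
  rw [← length_eq_dist hT _ h1, ← length_eq_dist hT _ h2, ← length_eq_dist hT _ hp, h3]

lemma eq_of_dist_start_eq (p : T.Walk u v) (hp : p.IsPath) (hx : x ∈ p.support)
    (hy : y ∈ p.support) (hd : T.dist u x = T.dist u y) : x = y := by
  have hsplit : y ∈ (p.takeUntil x hx).support ∨ y ∈ (p.dropUntil x hx).support := by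
    have h := p.take_spec hx
    rw [← h, Walk.mem_support_append_iff] at hy; exact hy
  cases hsplit with
  | inl h =>
    have h1 := dist_add_of_mem hT _ (hp.takeUntil hx) h
    have h0 : T.dist y x = 0 := by omega
    exact ((hT.isConnected.dist_eq_zero_iff).mp h0).symm
  | inr h =>
    have h1 := dist_add_of_mem hT _ (hp.dropUntil hx) h
    have h2 := dist_add_of_mem hT p hp hx
    have h3 := dist_add_of_mem hT p hp hy
    have h0 : T.dist x y = 0 := by omega
    exact (hT.isConnected.dist_eq_zero_iff).mp h0

lemma dist_cases_of_mem (p : T.Walk u v) (hp : p.IsPath) (hx : x ∈ p.support)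
    (hy : y ∈ p.support) :
    T.dist u x + T.dist x y = T.dist u y ∨ T.dist u y + T.dist y x = T.dist u x := by
  have hsplit : y ∈ (p.takeUntil x hx).support ∨ y ∈ (p.dropUntil x hx).support := by
    have h := p.take_spec hx
    rw [← h, Walk.mem_support_append_iff] at hy; exact hy
  cases hsplit with
  | inl h => exact Or.inr (dist_add_of_mem hT _ (hp.takeUntil hx) h)
  | inr h =>
    left
    have h1 := dist_add_of_mem hT _ (hp.dropUntil hx) h
    have h2 := dist_add_of_mem hT p hp hx
    have h3 := dist_add_of_mem hT p hp hy
    omega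

lemma exists_walk_subset (W : T.Walk u v) (hx : x ∈ W.support) (hy : y ∈ W.support) :
    ∃ Q : T.Walk x y, ∀ s ∈ Q.support, s ∈ W.support := by
  have hsplit : y ∈ (W.takeUntil x hx).support ∨ y ∈ (W.dropUntil x hx).support := by
    have h := W.take_spec hx
    rw [← h, Walk.mem_support_append_iff] at hy; exact hy
  cases hsplit with
  | inl h =>
    refine ⟨((W.takeUntil x hx).dropUntil y h).reverse, fun s hs => ?_⟩
    rw [Walk.support_reverse, List.mem_reverse] at hs
    exact W.support_takeUntil_subset hx ((W.takeUntil x hx).support_dropUntil_subset h hs)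
  | inr h =>
    refine ⟨(W.dropUntil x hx).takeUntil y h, fun s hs => ?_⟩
    exact W.support_dropUntil_subset hx ((W.dropUntil x hx).support_takeUntil_subset h hs)

lemma geo_support_subset (W : T.Walk u v) (hx : x ∈ W.support) (hy : y ∈ W.support) :
    ∀ s ∈ (geo hT x y).support, s ∈ W.support := by
  obtain ⟨Q, hQ⟩ := exists_walk_subset hT W hx hy
  exact fun s hs => hQ s (path_support_subset hT _ (geo_isPath hT x y) Q hs)

lemma mem_geo_symm (s : V) (hs : s ∈ (geo hT v u).support) : s ∈ (geo hT u v).support := by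
  have h : (geo hT u v).reverse = geo hT v u :=
    path_eq_geo hT _ ((geo_isPath hT u v).reverse)
  rw [← h, Walk.support_reverse, List.mem_reverse] at hs; exact hs

lemma append_isPath {p : T.Walk u x} {q : T.Walk x v} (hp : p.IsPath) (hq : q.IsPath)
    (hshare : ∀ s, s ∈ p.support → s ∈ q.support → s = x) : (p.append q).IsPath := by
  rw [Walk.isPath_def, Walk.support_append]
  have hnd := hq.support_nodup
  rw [q.support_eq_cons] at hnd
  obtain ⟨hxnot, htail⟩ := List.nodup_cons.mp hnd
  refine List.Nodup.append hp.support_nodup htail ?_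
  intro s hsp hst
  have hs' : s ∈ q.support := by rw [q.support_eq_cons]; exact List.mem_cons_of_mem _ hst
  have hsx : s = x := hshare s hsp hs'
  exact hxnot (hsx ▸ hst)

lemma append_dist {p : T.Walk u x} {q : T.Walk x v} (hC : (p.append q).IsPath) :
    T.dist u v = T.dist u x + T.dist x v := by
  have h := length_eq_dist hT _ hC
  rw [Walk.length_append] at h
  rw [← h, ← length_eq_dist hT p hC.of_append_left, ← length_eq_dist hT q hC.of_append_right]


section Isometry

variable (f : Equiv.Perm V) (hf : ∀ a b : V, T.Adj a b → T.Adj (f • a) (f • b))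

@[reducible] def homOf : T →g T := ⟨fun a => f • a, fun hab => hf _ _ hab⟩

include hf

lemma homOf_injective : Function.Injective (homOf f hf) := fun a b hab => by
  exact MulAction.injective f hab


lemma geo_map (u v : V) :
    (geo hT u v).map (homOf f hf) = geo hT (f • u) (f • v) :=
  path_eq_geo hT _ (Walk.map_isPath_of_injective (homOf_injective hT f hf) (geo_isPath hT u v))

lemma dist_smul (u v : V) : T.dist (f • u) (f • v) = T.dist u v := by
  have h1 := length_eq_dist hT _
    (Walk.map_isPath_of_injective (homOf_injective hT f hf) (geo_isPath hT u v))
  rw [Walk.length_map] at h1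
  rw [length_eq_dist hT _ (geo_isPath hT u v)] at h1
  exact h1.symm

lemma inv_act : ∀ a b : V, T.Adj a b → T.Adj (f⁻¹ • a) (f⁻¹ • b) := by
  intro a b hab
  rw [← SimpleGraph.dist_eq_one_iff_adj] at hab ⊢
  rw [← dist_smul hT f hf (f⁻¹ • a) (f⁻¹ • b), smul_inv_smul, smul_inv_smul]
  exact hab

/-- The bridge lemma: the geodesic from `v` to `f • v` passes through the point `q`
of the fixed set of `f` closest to `v`. -/
lemma fix_mem_geo {v q : V}
    (hq : f • q = q) (hqmin : ∀ s : V, f • s = s → T.dist v q ≤ T.dist v s) :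
    q ∈ (geo hT v (f • v)).support := by
  set P₁ := geo hT v q with hP₁
  have hP₁path : P₁.IsPath := geo_isPath hT v q
  set P₂ : T.Walk q (f • v) := ((P₁.map (homOf f hf)).copy rfl hq).reverse with hP₂
  have hP₂path : P₂.IsPath := by
    rw [hP₂, Walk.isPath_reverse_iff, Walk.isPath_copy]
    exact Walk.map_isPath_of_injective (homOf_injective hT f hf) hP₁path
  have hshare : ∀ s, s ∈ P₁.support → s ∈ P₂.support → s = q := by
    intro s hs1 hs2
    rw [hP₂, Walk.support_reverse, List.mem_reverse, Walk.support_copy,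
      Walk.support_map, List.mem_map] at hs2
    obtain ⟨t, ht, hts⟩ := hs2
    have hts' : s = f • t := hts.symm
    have e1 : T.dist v s + T.dist s q = T.dist v q := dist_add_of_mem hT P₁ hP₁path hs1
    have e2 : T.dist v t + T.dist t q = T.dist v q := dist_add_of_mem hT P₁ hP₁path ht
    have e3 : T.dist s q = T.dist t q := by
      rw [hts']
      conv_lhs => rw [← hq]
      exact dist_smul hT f hf t q
    have e4 : T.dist v s = T.dist v t := by omega
    have hst : s = t := eq_of_dist_start_eq hT P₁ hP₁path hs1 ht e4
    have hfs : f • s = s := by rw [← hst] at hts'; exact hts'.symm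
    have e5 : T.dist v q ≤ T.dist v s := hqmin s hfs
    have e6 : T.dist s q = 0 := by omega
    exact (hT.isConnected.dist_eq_zero_iff).mp e6
  have hC : (P₁.append P₂).IsPath := append_isPath hT hP₁path hP₂path hshare
  have hgeo : P₁.append P₂ = geo hT v (f • v) := path_eq_geo hT _ hC
  rw [← hgeo, Walk.mem_support_append_iff]
  exact Or.inl (Walk.end_mem_support P₁)

end Isometry

lemma exists_min (S : Set V) (hS : S.Nonempty) (z : V) :
    ∃ p ∈ S, ∀ a ∈ S, T.dist z p ≤ T.dist z a := by
  have hD : ((fun a => T.dist z a) '' S).Nonempty := hS.image _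
  have hmem := Nat.sInf_mem hD
  obtain ⟨p, hpS, hpd⟩ := hmem
  refine ⟨p, hpS, fun a ha => ?_⟩
  exact le_of_eq_of_le hpd (Nat.sInf_le ⟨a, ha, rfl⟩)

section Axis

variable (h : Equiv.Perm V) (hh : ∀ a b : V, T.Adj a b → T.Adj (h • a) (h • b))
  (y₀ : V) (hy₀ : ∀ w : V, T.dist y₀ (h • y₀) ≤ T.dist w (h • w))

include hy₀ in
lemma mem_axis_iff (v : V) :
    v ∈ axisSet T h ↔ T.dist v (h • v) = T.dist y₀ (h • y₀) := by
  simp only [axisSet, Set.mem_setOf_eq]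
  exact ⟨fun hv => le_antisymm (hv y₀) (hy₀ v), fun hv w => le_trans (le_of_eq hv) (hy₀ w)⟩

include hy₀ in
lemma geo_disp_subset_axis (e : Equiv.Perm V)
    (he : ∀ a b : V, T.Adj a b → T.Adj (e • a) (e • b))
    (hd : ∀ v : V, T.dist v (e • v) = T.dist v (h • v)) {y : V} (hy : y ∈ axisSet T h) :
    ∀ q ∈ (geo hT y (e • y)).support, q ∈ axisSet T h := by
  intro q hq
  rw [mem_axis_iff hT h y₀ hy₀] at hy ⊢
  have hadd := dist_add_of_mem hT _ (geo_isPath hT y (e • y)) hq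
  have htri : T.dist q (e • q) ≤ T.dist q (e • y) + T.dist (e • y) (e • q) :=
    hT.isConnected.dist_triangle
  have hiso : T.dist (e • y) (e • q) = T.dist y q := dist_smul hT e he y q
  have hcomm : T.dist y q = T.dist q y := SimpleGraph.dist_comm
  have hd1 := hd q
  have hd2 := hd y
  have hmin := hy₀ q
  omega

noncomputable def Wseg (e : Equiv.Perm V)
    (he : ∀ a b : V, T.Adj a b → T.Adj (e • a) (e • b)) :
    (n : ℕ) → T.Walk y₀ (e ^ n • y₀)
  | 0 => Walk.nil.copy rfl (by rw [pow_zero, one_smul])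
  | (n+1) => (geo hT y₀ (e • y₀)).append
      (((Wseg e he n).map (homOf e he)).copy rfl
        (by show e • (e ^ n • y₀) = e ^ (n+1) • y₀; rw [pow_succ', mul_smul]))

variable (e : Equiv.Perm V) (he : ∀ a b : V, T.Adj a b → T.Adj (e • a) (e • b))

lemma support_Wseg_zero : (Wseg hT y₀ e he 0).support = [y₀] := by
  simp [Wseg]

lemma mem_support_Wseg_succ {x : V} {n : ℕ} :
    x ∈ (Wseg hT y₀ e he (n+1)).support ↔
      x ∈ (geo hT y₀ (e • y₀)).support ∨
        ∃ t ∈ (Wseg hT y₀ e he n).support, e • t = x := by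
  conv_lhs => rw [Wseg]
  rw [Walk.mem_support_append_iff, Walk.support_copy, Walk.support_map]
  simp only [List.mem_map]
  constructor
  · rintro (hx | ⟨t, ht, rfl⟩)
    · exact Or.inl hx
    · exact Or.inr ⟨t, ht, rfl⟩
  · rintro (hx | ⟨t, ht, rfl⟩)
    · exact Or.inl hx
    · exact Or.inr ⟨t, ht, rfl⟩

lemma Wseg_mono : ∀ n : ℕ, ∀ x ∈ (Wseg hT y₀ e he n).support,
    x ∈ (Wseg hT y₀ e he (n+1)).support := by
  intro n
  induction n with
  | zero =>
    intro x hx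
    rw [support_Wseg_zero, List.mem_singleton] at hx
    subst hx
    exact Walk.start_mem_support _
  | succ n ih =>
    intro x hx
    rw [mem_support_Wseg_succ] at hx ⊢
    rcases hx with hx | ⟨t, ht, rfl⟩
    · exact Or.inl hx
    · exact Or.inr ⟨t, ih t ht, rfl⟩

lemma Wseg_mono_le {n k : ℕ} (hnk : n ≤ k) : ∀ x ∈ (Wseg hT y₀ e he n).support,
    x ∈ (Wseg hT y₀ e he k).support := by
  induction hnk with
  | refl => exact fun x hx => hx
  | step _ ih => exact fun x hx => Wseg_mono hT y₀ e he _ x (ih x hx)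

include hy₀ in
lemma Wseg_subset_axis (hd : ∀ v : V, T.dist v (e • v) = T.dist v (h • v)) :
    ∀ n : ℕ, ∀ x ∈ (Wseg hT y₀ e he n).support, x ∈ axisSet T h := by
  intro n
  induction n with
  | zero =>
    intro x hx
    rw [support_Wseg_zero, List.mem_singleton] at hx
    rw [hx]
    exact (mem_axis_iff hT h y₀ hy₀ y₀).mpr rfl
  | succ n ih =>
    intro x hx
    rw [mem_support_Wseg_succ] at hx
    rcases hx with hx | ⟨t, ht, rfl⟩
    · exact geo_disp_subset_axis hT h y₀ hy₀ e he hd ((mem_axis_iff hT h y₀ hy₀ y₀).mpr rfl) x hx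
    · have h1 : t ∈ axisSet T h := ih t ht
      rw [mem_axis_iff hT h y₀ hy₀] at h1 ⊢
      have h2 : T.dist (e • t) (e • (e • t)) = T.dist t (e • t) := dist_smul hT e he _ _
      have h3 := hd (e • t)
      have h4 := hd t
      omega

def ASet : Set V :=
  {x | ∃ n : ℕ, x ∈ (Wseg hT y₀ h hh n).support ∨
    x ∈ (Wseg hT y₀ h⁻¹ (inv_act hT h hh) n).support}

lemma y₀_mem_ASet : y₀ ∈ ASet hT h hh y₀ :=
  ⟨0, Or.inl (by rw [support_Wseg_zero]; exact List.mem_singleton.mpr rfl)⟩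

include hh hy₀ in
lemma disp_inv (v : V) : T.dist v (h⁻¹ • v) = T.dist v (h • v) := by
  have h1 : T.dist (h • v) (h • (h⁻¹ • v)) = T.dist v (h⁻¹ • v) := dist_smul hT h hh _ _
  rw [smul_inv_smul] at h1
  rw [← h1, SimpleGraph.dist_comm]

include hy₀ in
lemma ASet_subset_axis {x : V} (hx : x ∈ ASet hT h hh y₀) : x ∈ axisSet T h := by
  obtain ⟨n, hx | hx⟩ := hx
  · exact Wseg_subset_axis hT h y₀ hy₀ h hh (fun v => rfl) n x hx
  · exact Wseg_subset_axis hT h y₀ hy₀ h⁻¹ (inv_act hT h hh)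
      (disp_inv hT h hh y₀ hy₀) n x hx

lemma ASet_convex {x y : V} (hx : x ∈ ASet hT h hh y₀) (hy : y ∈ ASet hT h hh y₀) :
    ∀ s ∈ (geo hT x y).support, s ∈ ASet hT h hh y₀ := by
  obtain ⟨n, hx⟩ := hx
  obtain ⟨k, hy⟩ := hy
  set N := max n k with hN
  set W1 := Wseg hT y₀ h hh N with hW1
  set W2 := Wseg hT y₀ h⁻¹ (inv_act hT h hh) N with hW2
  have hx' : x ∈ W1.support ∨ x ∈ W2.support := by
    rcases hx with hx | hx
    · exact Or.inl (Wseg_mono_le hT y₀ h hh (le_max_left n k) x hx)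
    · exact Or.inr (Wseg_mono_le hT y₀ h⁻¹ _ (le_max_left n k) x hx)
  have hy' : y ∈ W1.support ∨ y ∈ W2.support := by
    rcases hy with hy | hy
    · exact Or.inl (Wseg_mono_le hT y₀ h hh (le_max_right n k) y hy)
    · exact Or.inr (Wseg_mono_le hT y₀ h⁻¹ _ (le_max_right n k) y hy)
  set U := W1.reverse.append W2 with hU
  have hmemU : ∀ s : V, s ∈ U.support ↔ s ∈ W1.support ∨ s ∈ W2.support := by
    intro s
    rw [hU, Walk.mem_support_append_iff, Walk.support_reverse, List.mem_reverse]
  intro s hs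
  have hsU := geo_support_subset hT U ((hmemU x).mpr hx') ((hmemU y).mpr hy') s hs
  exact ⟨N, (hmemU s).mp hsU⟩

lemma smul_mem_cross (e₁ e₂ : Equiv.Perm V)
    (he₁ : ∀ a b : V, T.Adj a b → T.Adj (e₁ • a) (e₁ • b))
    (he₂ : ∀ a b : V, T.Adj a b → T.Adj (e₂ • a) (e₂ • b))
    (hee : e₂ = e₁⁻¹) {x : V} {n : ℕ}
    (hx : x ∈ (Wseg hT y₀ e₂ he₂ n).support) :
    (∃ k, e₁ • x ∈ (Wseg hT y₀ e₁ he₁ k).support) ∨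
      (∃ k, e₁ • x ∈ (Wseg hT y₀ e₂ he₂ k).support) := by
  match n with
  | 0 =>
    rw [support_Wseg_zero, List.mem_singleton] at hx
    subst hx
    refine Or.inl ⟨1, ?_⟩
    rw [mem_support_Wseg_succ]
    exact Or.inl (Walk.end_mem_support _)
  | (n+1) =>
    rw [mem_support_Wseg_succ] at hx
    rcases hx with hx | ⟨t, ht, rfl⟩
    · refine Or.inl ⟨1, ?_⟩
      rw [mem_support_Wseg_succ]
      left
      have hend : e₁ • (e₂ • y₀) = y₀ := by rw [hee, smul_inv_smul]
      set Q : T.Walk (e₁ • y₀) y₀ :=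
        (((geo hT y₀ (e₂ • y₀)).map (homOf e₁ he₁)).copy rfl hend) with hQ
      have hQpath : Q.IsPath := by
        rw [hQ, Walk.isPath_copy]
        exact Walk.map_isPath_of_injective (homOf_injective hT e₁ he₁)
          (geo_isPath hT y₀ (e₂ • y₀))
      have hQrev : Q.reverse = geo hT y₀ (e₁ • y₀) :=
        path_eq_geo hT _ hQpath.reverse
      have hmem : e₁ • x ∈ Q.support := by
        rw [hQ, Walk.support_copy, Walk.support_map, List.mem_map]
        exact ⟨x, hx, rfl⟩
      rw [← hQrev, Walk.support_reverse, List.mem_reverse]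
      exact hmem
    · have hxx : e₁ • e₂ • t = t := by rw [hee, smul_inv_smul]
      rw [hxx]
      exact Or.inr ⟨n, ht⟩

lemma smul_mem_ASet {x : V} (hx : x ∈ ASet hT h hh y₀) : h • x ∈ ASet hT h hh y₀ := by
  obtain ⟨n, hx | hx⟩ := hx
  · exact ⟨n + 1, Or.inl ((mem_support_Wseg_succ hT y₀ h hh).mpr (Or.inr ⟨x, hx, rfl⟩))⟩
  · rcases smul_mem_cross hT y₀ h h⁻¹ hh (inv_act hT h hh) rfl hx with ⟨k, hk⟩ | ⟨k, hk⟩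
    · exact ⟨k, Or.inl hk⟩
    · exact ⟨k, Or.inr hk⟩

lemma inv_smul_mem_ASet {x : V} (hx : x ∈ ASet hT h hh y₀) :
    h⁻¹ • x ∈ ASet hT h hh y₀ := by
  obtain ⟨n, hx | hx⟩ := hx
  · rcases smul_mem_cross hT y₀ h⁻¹ h (inv_act hT h hh) hh (inv_inv h).symm hx with
      ⟨k, hk⟩ | ⟨k, hk⟩
    · exact ⟨k, Or.inr hk⟩
    · exact ⟨k, Or.inl hk⟩
  · exact ⟨n + 1, Or.inr
      ((mem_support_Wseg_succ hT y₀ h⁻¹ (inv_act hT h hh)).mpr (Or.inr ⟨x, hx, rfl⟩))⟩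

lemma gate_path {z p : V} (hpA : p ∈ ASet hT h hh y₀)
    (hmin : ∀ a ∈ ASet hT h hh y₀, T.dist z p ≤ T.dist z a)
    {a : V} (ha : a ∈ ASet hT h hh y₀) :
    ((geo hT z p).append (geo hT p a)).IsPath := by
  refine append_isPath hT (geo_isPath hT z p) (geo_isPath hT p a) ?_
  intro s hs1 hs2
  have hsA : s ∈ ASet hT h hh y₀ := ASet_convex hT h hh y₀ hpA ha s hs2
  have e1 := dist_add_of_mem hT _ (geo_isPath hT z p) hs1
  have e2 := hmin s hsA
  have e3 : T.dist s p = 0 := by omega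
  exact (hT.isConnected.dist_eq_zero_iff).mp e3

lemma gate_unique {z p p' : V} (hpA : p ∈ ASet hT h hh y₀)
    (hmin : ∀ a ∈ ASet hT h hh y₀, T.dist z p ≤ T.dist z a)
    (hp'A : p' ∈ ASet hT h hh y₀)
    (hmin' : ∀ a ∈ ASet hT h hh y₀, T.dist z p' ≤ T.dist z a) : p = p' := by
  have hpath := gate_path hT h hh y₀ hpA hmin hp'A
  have hadd := append_dist hT hpath
  have h1 := hmin p' hp'A
  have h2 := hmin' p hpA
  have e3 : T.dist p p' = 0 := by omega
  exact (hT.isConnected.dist_eq_zero_iff).mp e3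

include hy₀ in
lemma gate_geo_axis (hfix : ∀ v : V, h • v ≠ v) (z : V) :
    ∃ p ∈ ASet hT h hh y₀, p ∈ (geo hT z (h • z)).support ∧
      T.dist z (h • z) = 2 * T.dist z p + T.dist y₀ (h • y₀) := by
  obtain ⟨p, hpA, hmin⟩ := exists_min hT (ASet hT h hh y₀) ⟨y₀, y₀_mem_ASet hT h hh y₀⟩ z
  have hpA' : h • p ∈ ASet hT h hh y₀ := smul_mem_ASet hT h hh y₀ hpA
  have hmin' : ∀ a ∈ ASet hT h hh y₀, T.dist (h • z) (h • p) ≤ T.dist (h • z) a := by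
    intro a ha
    have h1 := hmin _ (inv_smul_mem_ASet hT h hh y₀ ha)
    have h3 : T.dist (h • z) a = T.dist z (h⁻¹ • a) := by
      rw [← dist_smul hT h hh z (h⁻¹ • a), smul_inv_smul]
    rw [h3, dist_smul hT h hh z p]
    exact h1
  have hpaxis : p ∈ axisSet T h := ASet_subset_axis hT h hh y₀ hy₀ hpA
  have hm : T.dist p (h • p) = T.dist y₀ (h • y₀) :=
    (mem_axis_iff hT h y₀ hy₀ p).mp hpaxis
  have hmpos : T.dist p (h • p) ≠ 0 := by
    intro h0
    exact hfix p ((hT.isConnected.dist_eq_zero_iff.mp h0).symm)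
  have hpath2 : ((geo hT (h • z) (h • p)).append (geo hT (h • p) p)).IsPath :=
    gate_path hT h hh y₀ hpA' hmin' hpA
  have hC2eq : (geo hT (h • z) (h • p)).append (geo hT (h • p) p) = geo hT (h • z) p :=
    path_eq_geo hT _ hpath2
  have hshare : ∀ s, s ∈ (geo hT z p).support → s ∈ (geo hT p (h • z)).support → s = p := by
    intro s hs1 hs2
    have hs2' : s ∈ (geo hT (h • z) p).support := mem_geo_symm hT s hs2
    rw [← hC2eq, Walk.mem_support_append_iff] at hs2'
    rcases hs2' with h2 | h2
    · exfalso
      rw [← geo_map hT h hh z p, Walk.support_map, List.mem_map] at h2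
      obtain ⟨t, ht, hts⟩ := h2
      have hts' : h • t = s := hts
      have hminS : ∀ a ∈ ASet hT h hh y₀, T.dist s p ≤ T.dist s a := by
        intro a ha
        have g1 := dist_add_of_mem hT _ (geo_isPath hT z p) hs1
        have g2 : T.dist z a ≤ T.dist z s + T.dist s a := hT.isConnected.dist_triangle
        have g3 := hmin a ha
        omega
      have hminT : ∀ a ∈ ASet hT h hh y₀, T.dist t p ≤ T.dist t a := by
        intro a ha
        have g1 := dist_add_of_mem hT _ (geo_isPath hT z p) ht
        have g2 : T.dist z a ≤ T.dist z t + T.dist t a := hT.isConnected.dist_triangle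
        have g3 := hmin a ha
        omega
      have hminS' : ∀ a ∈ ASet hT h hh y₀, T.dist s (h • p) ≤ T.dist s a := by
        intro a ha
        have g1 := hminT _ (inv_smul_mem_ASet hT h hh y₀ ha)
        have g3 : T.dist s a = T.dist t (h⁻¹ • a) := by
          rw [← hts', ← dist_smul hT h hh t (h⁻¹ • a), smul_inv_smul]
        have g4 : T.dist s (h • p) = T.dist t p := by
          rw [← hts']; exact dist_smul hT h hh t p
        omega
      have heq : p = h • p := gate_unique hT h hh y₀ hpA hminS hpA' hminS'
      exact hfix p heq.symm
    · have hsA : s ∈ ASet hT h hh y₀ := ASet_convex hT h hh y₀ hpA' hpA s h2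
      have e1 := dist_add_of_mem hT _ (geo_isPath hT z p) hs1
      have e2 := hmin s hsA
      have e3 : T.dist s p = 0 := by omega
      exact (hT.isConnected.dist_eq_zero_iff).mp e3
  have hC : ((geo hT z p).append (geo hT p (h • z))).IsPath :=
    append_isPath hT (geo_isPath hT z p) (geo_isPath hT p (h • z)) hshare
  have hCeq : (geo hT z p).append (geo hT p (h • z)) = geo hT z (h • z) :=
    path_eq_geo hT _ hC
  refine ⟨p, hpA, ?_, ?_⟩
  · rw [← hCeq, Walk.mem_support_append_iff]
    exact Or.inl (Walk.end_mem_support _)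
  · have d1 : T.dist z (h • z) = T.dist z p + T.dist p (h • z) := append_dist hT hC
    have d2 : T.dist (h • z) p = T.dist (h • z) (h • p) + T.dist (h • p) p :=
      append_dist hT hpath2
    have d3 : T.dist (h • z) (h • p) = T.dist z p := dist_smul hT h hh z p
    have d4 : T.dist p (h • z) = T.dist (h • z) p := SimpleGraph.dist_comm
    have d5 : T.dist (h • p) p = T.dist p (h • p) := SimpleGraph.dist_comm
    omega

include hh hy₀ in
lemma axis_subset_ASet (hfix : ∀ v : V, h • v ≠ v) {x : V} (hx : x ∈ axisSet T h) :
    x ∈ ASet hT h hh y₀ := by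
  obtain ⟨p, hpA, hpsup, hdist⟩ := gate_geo_axis hT h hh y₀ hy₀ hfix x
  have h1 := (mem_axis_iff hT h y₀ hy₀ x).mp hx
  have h2 : T.dist x p = 0 := by omega
  have h3 : x = p := (hT.isConnected.dist_eq_zero_iff).mp h2
  rw [h3]; exact hpA

include hh hy₀ in
lemma axis_convex (hfix : ∀ v : V, h • v ≠ v) {x y : V} (hx : x ∈ axisSet T h)
    (hy : y ∈ axisSet T h) : ∀ s ∈ (geo hT x y).support, s ∈ axisSet T h :=
  fun s hs => ASet_subset_axis hT h hh y₀ hy₀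
    (ASet_convex hT h hh y₀ (axis_subset_ASet hT h hh y₀ hy₀ hfix hx)
      (axis_subset_ASet hT h hh y₀ hy₀ hfix hy) s hs)

include hh hy₀ in
lemma axis_mem_geo (hfix : ∀ v : V, h • v ≠ v) (z : V) :
    ∃ p ∈ axisSet T h, p ∈ (geo hT z (h • z)).support := by
  obtain ⟨p, hpA, hpsup, _⟩ := gate_geo_axis hT h hh y₀ hy₀ hfix z
  exact ⟨p, ASet_subset_axis hT h hh y₀ hy₀ hpA, hpsup⟩

end Axis

end Stmt2Aux

open Stmt2Aux

/-- Let `g, h` be automorphisms of a tree `T`, with `g` having nonempty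
fixed subtree `F` of diameter at most 1 (a vertex or an edge), and `h` loxodromic
with axis `L`.  If `L` is disjoint from `F`, then `L` and `g(L)` are disjoint, every
path (in particular the geodesic bridge) from `L` to `g(L)` meets `F`, and the
minimal invariant subtree `T'` of any group `K'` containing both `g` and `h`
intersects `F`. -/
theorem stmt2 {V : Type*} (T : SimpleGraph V) (hT : T.IsTree)
    (g h : Equiv.Perm V)
    (hgact : ∀ u v : V, T.Adj u v → T.Adj (g • u) (g • v))
    (hhact : ∀ u v : V, T.Adj u v → T.Adj (h • u) (h • v))
    (F : Set V) (hF : F = {v : V | g • v = v}) (hFne : F.Nonempty)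
    (hFsmall : (∃ v, F = {v}) ∨ (∃ v w, T.Adj v w ∧ F = {v, w}))
    (hlox : IsLox T h) (L : Set V) (hL : L = axisSet T h)
    (hdisj : L ∩ F = ∅) :
    L ∩ ((g • ·) '' L) = ∅ ∧
    (∀ u ∈ L, ∀ v ∈ (g • ·) '' L, ∀ p : T.Walk u v, p.IsPath →
      ∃ w ∈ p.support, w ∈ F) ∧
    (∀ (K' : Subgroup (Equiv.Perm V)) (T' : Set V), g ∈ K' → h ∈ K' →
      IsSubtree T T' → (∀ k : K', ((k : Equiv.Perm V) • ·) '' T' = T') →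
      (∀ S : Set V, IsSubtree T S →
        (∀ k : K', ((k : Equiv.Perm V) • ·) '' S = S) → T' ⊆ S) →
      (T' ∩ F).Nonempty) := by
  classical
  obtain ⟨v₀, hv₀F⟩ := hFne
  obtain ⟨y₀, hy₀⟩ : ∃ y₀ : V, ∀ w : V, T.dist y₀ (h • y₀) ≤ T.dist w (h • w) := by
    have hD : (Set.range fun w => T.dist w (h • w)).Nonempty := ⟨_, ⟨v₀, rfl⟩⟩
    obtain ⟨y₀, hy⟩ := Nat.sInf_mem hD
    exact ⟨y₀, fun w => le_of_eq_of_le hy (Nat.sInf_le ⟨w, rfl⟩)⟩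
  have hfix : ∀ v : V, h • v ≠ v := hlox.1
  have hFdisj : ∀ x, x ∈ L → x ∉ F := by
    intro x hx hxF
    have hmem : x ∈ L ∩ F := ⟨hx, hxF⟩
    rw [hdisj] at hmem
    exact hmem
  have hbridge : ∀ w : V, w ∉ F → ∃ q ∈ F, q ∈ (geo hT w (g • w)).support := by
    intro w hwF
    obtain ⟨q, hqF, hqmin⟩ := exists_min hT F ⟨v₀, hv₀F⟩ w
    refine ⟨q, hqF, ?_⟩
    refine fix_mem_geo hT g hgact ?_ ?_
    · rw [hF] at hqF; exact hqF
    · intro s hs; exact hqmin s (by rw [hF]; exact hs)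
  have part1 : L ∩ ((g • ·) '' L) = ∅ := by
    rw [Set.eq_empty_iff_forall_notMem]
    rintro x ⟨hxL, y, hyL, rfl⟩
    have hyF : y ∉ F := hFdisj y hyL
    obtain ⟨q, hqF, hqsup⟩ := hbridge y hyF
    have hyA : y ∈ axisSet T h := by rw [← hL]; exact hyL
    have hxA : g • y ∈ axisSet T h := by rw [← hL]; exact hxL
    have hqL : q ∈ L := by
      rw [hL]
      exact axis_convex hT h hhact y₀ hy₀ hfix hyA hxA q hqsup
    exact hFdisj q hqL hqF
  have part2 : ∀ u ∈ L, ∀ v ∈ (g • ·) '' L, ∀ p : T.Walk u v, p.IsPath →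
      ∃ w ∈ p.support, w ∈ F := by
    rintro u huL v ⟨w, hwL, rfl⟩ p hp
    have hwF : w ∉ F := hFdisj w hwL
    obtain ⟨q, hqF, hqsup⟩ := hbridge w hwF
    refine ⟨q, ?_, hqF⟩
    have hW : q ∈ ((geo hT w u).append p).support :=
      path_support_subset hT _ (geo_isPath hT w (g • w)) _ hqsup
    rw [SimpleGraph.Walk.mem_support_append_iff] at hW
    rcases hW with hW | hW
    · exfalso
      have hwA : w ∈ axisSet T h := by rw [← hL]; exact hwL
      have huA : u ∈ axisSet T h := by rw [← hL]; exact huL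
      have hqL : q ∈ L := by
        rw [hL]
        exact axis_convex hT h hhact y₀ hy₀ hfix hwA huA q hW
      exact hFdisj q hqL hqF
    · exact hW
  refine ⟨part1, part2, ?_⟩
  intro K' T' hgK hhK hsub hinvar _hmin
  obtain ⟨z, hzT⟩ := hsub.1
  have himg : ∀ (k : Equiv.Perm V), k ∈ K' → ∀ x ∈ T', k • x ∈ T' := by
    intro k hk x hx
    have hi := hinvar ⟨k, hk⟩
    rw [← hi]
    exact ⟨x, hx, rfl⟩
  have hhz : h • z ∈ T' := himg h hhK z hzT
  obtain ⟨pL, hpaxis, hpsup⟩ := axis_mem_geo hT h hhact y₀ hy₀ hfix z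
  have hpT : pL ∈ T' := hsub.2 hzT hhz _ (geo_isPath hT z (h • z)) pL hpsup
  have hpL : pL ∈ L := by rw [hL]; exact hpaxis
  have hgp : g • pL ∈ T' := himg g hgK pL hpT
  obtain ⟨q, hqsup, hqF⟩ := part2 pL hpL (g • pL) ⟨pL, hpL, rfl⟩
    (geo hT pL (g • pL)) (geo_isPath hT pL (g • pL))
  have hqT : q ∈ T' := hsub.2 hpT hgp _ (geo_isPath hT pL (g • pL)) q hqsup
  exact ⟨q, hqT, hqF⟩
end

section
/- Let T be a tree, T_G ⊆ T a subtree with nearest point projection P, and suppose there is a constant D > 0 and a family of subtrees {T_k}_{k=0}^{2n} of T with T_k ∩ T_{k+1} ≠ ∅ for all k, such that diam(P(σ)) ≤ D for every geodesic σ contained in some T_k. If t ∈ T_0 ∩ T_G and t' ∈ T_{2n} ∩ T_G, then d_T(t, t') ≤ (2n+1)·D. -/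
namespace SimpleGraph

variable {V : Type*} {G : SimpleGraph V}

theorem Connected.exists_isPath_support_subset (hG : G.Connected) {S : Set V}
    (hS : IsSubtree G S) {u v : V} (hu : u ∈ S) (hv : v ∈ S) :
    ∃ p : G.Walk u v, p.IsPath ∧ ∀ w ∈ p.support, w ∈ S := by
  obtain ⟨p, hp⟩ := (hG u v).exists_isPath
  exact ⟨p, hp, hS.2 hu hv p hp⟩

theorem Connected.eq_of_forall_dist_le (hG : G.Connected) {S : Set V} {v p : V}
    (hv : v ∈ S) (hp : ∀ w ∈ S, G.dist v p ≤ G.dist v w) : p = v := by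
  have hzero : G.dist v p = 0 := by simpa using hp v hv
  exact (hG.dist_eq_zero_iff.mp hzero).symm

theorem Connected.dist_le_of_chain (hG : G.Connected) (f : V → V) {D m : ℕ}
    (S : Fin (m + 1) → Set V) (hS : ∀ k, ∀ a ∈ S k, ∀ b ∈ S k, G.dist (f a) (f b) ≤ D)
    (hchain : ∀ k : Fin m, (S k.castSucc ∩ S k.succ).Nonempty) {a : V} (ha : a ∈ S 0) :
    ∀ k : Fin (m + 1), ∀ z ∈ S k, G.dist (f a) (f z) ≤ (k + 1) * D := by
  refine Fin.induction (fun z hz => by simpa using hS 0 a ha z hz) ?_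
  intro k ih z hz
  obtain ⟨x, hxk, hxk'⟩ := hchain k
  calc G.dist (f a) (f z) ≤ G.dist (f a) (f x) + G.dist (f x) (f z) := hG.dist_triangle
    _ ≤ (k + 1) * D + D := Nat.add_le_add (ih x hxk) (hS k.succ x hxk' z hz)
    _ = (k.succ + 1) * D := by simp only [Fin.val_succ]; ring

end SimpleGraph

/-- Chaining subtrees `T_0, …, T_{2n}` with consecutive nonempty
intersections, where the nearest point projection `P` to the subtree `T_G` has image
of diameter at most `D` on every geodesic contained in one of the `T_k`, bounds the
distance between points of `T_0 ∩ T_G` and `T_{2n} ∩ T_G` by `(2n+1)·D`. -/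
theorem stmt4 {V : Type*} (T : SimpleGraph V) (hT : T.IsTree)
    (TG : Set V)
    (P : V → V)
    (hP : ∀ v : V, P v ∈ TG ∧ ∀ w ∈ TG, T.dist v (P v) ≤ T.dist v w)
    (D : ℕ) (n : ℕ)
    (Tk : Fin (2 * n + 1) → Set V)
    (hsub : ∀ k, IsSubtree T (Tk k))
    (hchain : ∀ k : Fin (2 * n + 1), ∀ hk : (k : ℕ) + 1 < 2 * n + 1,
      (Tk k ∩ Tk ⟨(k : ℕ) + 1, hk⟩).Nonempty)
    (hproj : ∀ (k : Fin (2 * n + 1)) (u v : V) (p : T.Walk u v), p.IsPath →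
      (∀ w ∈ p.support, w ∈ Tk k) →
      ∀ a ∈ p.support, ∀ b ∈ p.support, T.dist (P a) (P b) ≤ D)
    (t t' : V)
    (ht : t ∈ Tk ⟨0, by omega⟩ ∩ TG)
    (ht' : t' ∈ Tk ⟨2 * n, by omega⟩ ∩ TG) :
    T.dist t t' ≤ (2 * n + 1) * D := by
  have hconn := hT.connected
  have hfix : ∀ v ∈ TG, P v = v := fun v hv => hconn.eq_of_forall_dist_le hv (hP v).2
  have hdiam : ∀ k, ∀ a ∈ Tk k, ∀ b ∈ Tk k, T.dist (P a) (P b) ≤ D := by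
    intro k a ha b hb
    obtain ⟨p, hp, hpk⟩ := hconn.exists_isPath_support_subset (hsub k) ha hb
    exact hproj k a b p hp hpk a p.start_mem_support b p.end_mem_support
  have hbound := hconn.dist_le_of_chain P Tk hdiam
    (fun k => hchain k.castSucc (by simp)) ht.1 (Fin.last _) t' ht'.1
  rwa [hfix t ht.2, hfix t' ht'.2, Fin.val_last] at hbound
end

section
/- Let G be a finitely generated group acting by isometries on a simplicial tree T with a free cocompact action on an invariant subtree T_G, and suppose there is a constant D such that for every member T_u of a given family 𝒯 of subtrees of T, diam(T_G ∩ T_u) ≤ D. Suppose moreover that for points u in a connected graph 𝒞 with a G-action, there is a G-equivariant assignment u ↦ T_u ∈ 𝒯 such that whenever u, u' are adjacent in 𝒞, T_u ∩ T_{u'} ≠ ∅ (via the subtree of the pair), and a basepoint t ∈ T_G lies in T_{u₀} for a basepoint u₀ with G·t coarsely equal to T_G. Then the orbit map G → 𝒞, g ↦ g·u₀, is a quasi-isometric embedding. -/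
/-- Word length of `g` with respect to a symmetrized generating set `S`. -/
noncomputable def wordLength {G : Type*} [Group G] (S : Finset G) (g : G) : ℕ :=
  sInf {n : ℕ | ∃ l : List G, (∀ x ∈ l, x ∈ S ∨ x⁻¹ ∈ S) ∧ l.prod = g ∧ l.length = n}

/-!
A geodesic of length `n` from `u₀` to `g • u₀` in `𝒞` gives a chain of `n + 1` subtrees `T_u`,
consecutive ones meeting, whose union contains the path from `t` to `g • t`. That path lies in
`T_G`, and each `T_u` contains at most `D + 1` of its vertices, so
`d_T(t, g • t) + 1 ≤ (n + 1)(D + 1)`.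

Conversely `|g|` is bounded by a multiple of `d_T(t, g • t) + 1` (Švarc–Milnor): let `A` be the
finite set of vertices of chosen paths in `T_G` from `t` to `s • t`, `s ∈ S`. The edges of `T`
lying in some translate `k • A` form a `G`-invariant graph in which every `g • t` is reachable
from `t`, so the path from `t` to `g • t` uses only such edges. Consecutive edges lie in
translates `k • A`, `k' • A` that meet, and by freeness only finitely many `k⁻¹ * k'` arise.

Finally, an orbit map of a finitely generated group acting by isometries is Lipschitz.
-/

open SimpleGraph Finset
open scoped Pointwise

section WordLength

variable {G : Type*} [Group G] {S : Finset G}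

theorem wordLength_le_length (l : List G) (hl : ∀ x ∈ l, x ∈ S ∨ x⁻¹ ∈ S) :
    wordLength S l.prod ≤ l.length :=
  Nat.sInf_le ⟨l, hl, rfl, rfl⟩

theorem wordLength_one : wordLength S 1 = 0 :=
  Nat.eq_zero_of_le_zero (wordLength_le_length [] (by simp))

theorem exists_list_length_eq_wordLength (hgen : Subgroup.closure (S : Set G) = ⊤) (g : G) :
    ∃ l : List G, (∀ x ∈ l, x ∈ S ∨ x⁻¹ ∈ S) ∧ l.prod = g ∧ l.length = wordLength S g := by
  have hg : g ∈ Submonoid.closure ((S : Set G) ∪ (S : Set G)⁻¹) := by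
    rw [← Subgroup.closure_toSubmonoid, hgen]
    trivial
  obtain ⟨l, hl, hlg⟩ := Submonoid.exists_list_of_mem_closure hg
  exact Nat.sInf_mem
    (s := {n | ∃ l : List G, (∀ x ∈ l, x ∈ S ∨ x⁻¹ ∈ S) ∧ l.prod = g ∧ l.length = n})
    ⟨l.length, l, fun y hy => by simpa using hl y hy, hlg, rfl⟩

theorem wordLength_mul_le (hgen : Subgroup.closure (S : Set G) = ⊤) (a b : G) :
    wordLength S (a * b) ≤ wordLength S a + wordLength S b := by
  obtain ⟨la, hla, rfl, hlena⟩ := exists_list_length_eq_wordLength hgen a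
  obtain ⟨lb, hlb, rfl, hlenb⟩ := exists_list_length_eq_wordLength hgen b
  rw [← hlena, ← hlenb, ← List.length_append, ← List.prod_append]
  exact wordLength_le_length _ fun x hx => (List.mem_append.1 hx).elim (hla x) (hlb x)

theorem exists_le_mul_wordLength (hgen : Subgroup.closure (S : Set G) = ⊤) {φ : G → ℕ}
    (hone : φ 1 = 0) (hmul : ∀ x y, φ (x * y) ≤ φ x + φ y) (hinv : ∀ x, φ x⁻¹ = φ x) :
    ∃ M : ℕ, ∀ g, φ g ≤ M * wordLength S g := by
  refine ⟨S.sup φ, fun g => ?_⟩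
  obtain ⟨l, hl, rfl, hlen⟩ := exists_list_length_eq_wordLength hgen g
  rw [← hlen]
  clear hlen
  induction l with
  | nil => simp [hone]
  | cons x l ih =>
    have hx : φ x ≤ S.sup φ := by
      rcases hl x List.mem_cons_self with h | h
      · exact le_sup h
      · simpa [hinv] using le_sup (f := φ) h
    calc φ (x :: l).prod ≤ φ x + φ l.prod := hmul x l.prod
      _ ≤ S.sup φ + S.sup φ * l.length :=
          add_le_add hx (ih fun y hy => hl y (List.mem_cons_of_mem _ hy))
      _ = S.sup φ * (x :: l).length := by rw [List.length_cons, mul_add_one, add_comm]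

end WordLength

theorem Finset.card_le_succ_of_forall_sub_le {I : Finset ℕ} {D : ℕ}
    (h : ∀ j ∈ I, ∀ k ∈ I, j ≤ k → k - j ≤ D) : #I ≤ D + 1 := by
  rcases I.eq_empty_or_nonempty with rfl | hI
  · simp
  calc #I ≤ #(Icc (I.min' hI) (I.min' hI + D)) := card_le_card fun k hk => by
        have := h _ (I.min'_mem hI) k hk (I.min'_le k hk)
        exact mem_Icc.2 ⟨I.min'_le k hk, by omega⟩
    _ = D + 1 := by simp only [Nat.card_Icc]; omega

theorem succ_le_card_mul_of_forall_exists {α : Type*} (s : Finset α) (P : ℕ → α → Prop)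
    {L D : ℕ} (hcover : ∀ j ≤ L, ∃ a ∈ s, P j a)
    (hspread : ∀ a j k, j ≤ k → k ≤ L → P j a → P k a → k - j ≤ D) :
    L + 1 ≤ #s * (D + 1) := by
  classical
  calc L + 1 = #(range (L + 1)) := (card_range _).symm
    _ ≤ #(s.biUnion fun a => {j ∈ range (L + 1) | P j a}) := card_le_card fun j hj => by
        obtain ⟨a, ha, hP⟩ := hcover j (Nat.lt_succ_iff.1 (mem_range.1 hj))
        exact mem_biUnion.2 ⟨a, ha, mem_filter.2 ⟨hj, hP⟩⟩
    _ ≤ ∑ a ∈ s, #{j ∈ range (L + 1) | P j a} := card_biUnion_le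
    _ ≤ #s * (D + 1) := by
        refine (sum_le_card_nsmul s _ (D + 1) fun a _ =>
          card_le_succ_of_forall_sub_le fun j hj k hk hjk => ?_).trans_eq (smul_eq_mul _ _)
        rw [mem_filter, mem_range] at hj hk
        exact hspread a j k hjk (by omega) hj.2 hk.2

theorem IsSubtree.exists_walk_support_subset {V : Type*} {T : SimpleGraph V} {A : Set V}
    (hA : IsSubtree T A) (hT : T.Connected) {x y : V} (hx : x ∈ A) (hy : y ∈ A) :
    ∃ p : T.Walk x y, ∀ z ∈ p.support, z ∈ A := by
  obtain ⟨p, hp, -⟩ := (hT x y).exists_path_of_dist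
  exact ⟨p, hA.2 hx hy p hp⟩

namespace SimpleGraph

variable {V : Type*} {T : SimpleGraph V}

theorem IsTree.length_eq_dist_of_isPath (hT : T.IsTree) {x y : V} {p : T.Walk x y}
    (hp : p.IsPath) : p.length = T.dist x y := by
  obtain ⟨q, hq, hlen⟩ := (hT.connected x y).exists_path_of_dist
  rw [(hT.existsUnique_path x y).unique hp hq, hlen]

theorem Walk.dist_getVert_eq_of_length_eq_dist {x y : V} {p : T.Walk x y}
    (hp : p.length = T.dist x y) {j k : ℕ} (hjk : j ≤ k) (hk : k ≤ p.length) :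
    T.dist (p.getVert j) (p.getVert k) = k - j := by
  have h := length_eq_dist_of_subwalk hp ((isSubwalk_take _ (k - j)).trans (isSubwalk_drop p j))
  rw [take_length, drop_length, drop_getVert, Nat.add_sub_cancel' hjk] at h
  omega

theorem Reachable.dist_map_le {V' : Type*} {T' : SimpleGraph V'} (f : T →g T') {x y : V}
    (h : T.Reachable x y) : T'.dist (f x) (f y) ≤ T.dist x y := by
  obtain ⟨p, hp⟩ := h.exists_walk_length_eq_dist
  rw [← hp, ← p.length_map f]
  exact dist_le _

theorem exists_walk_support_subset_of_walk {C : Type*} {𝒞 : SimpleGraph C} (hT : T.Connected)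
    {Tmap : C → Set V} (hTsub : ∀ u, IsSubtree T (Tmap u))
    (hadj : ∀ u u', 𝒞.Adj u u' → (Tmap u ∩ Tmap u').Nonempty) {u v : C} (q : 𝒞.Walk u v)
    {x y : V} (hx : x ∈ Tmap u) (hy : y ∈ Tmap v) :
    ∃ W : T.Walk x y, ∀ z ∈ W.support, ∃ w ∈ q.support, z ∈ Tmap w := by
  induction q generalizing x with
  | nil =>
    obtain ⟨W, hW⟩ := (hTsub _).exists_walk_support_subset hT hx hy
    exact ⟨W, fun z hz => ⟨_, by simp, hW z hz⟩⟩
  | cons h q ih =>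
    obtain ⟨p, hp, hp'⟩ := hadj _ _ h
    obtain ⟨W₁, hW₁⟩ := (hTsub _).exists_walk_support_subset hT hx hp
    obtain ⟨W₂, hW₂⟩ := ih hp' hy
    refine ⟨W₁.append W₂, fun z hz => ?_⟩
    rcases (Walk.mem_support_append_iff W₁ W₂).1 hz with hz | hz
    · exact ⟨_, by simp, hW₁ z hz⟩
    · obtain ⟨w, hw, hzw⟩ := hW₂ z hz
      exact ⟨w, by simp [hw], hzw⟩

theorem dist_add_one_le_of_mem_inter {C : Type*} {𝒞 : SimpleGraph C} (hT : T.IsTree)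
    (h𝒞 : 𝒞.Connected) {TG : Set V} (hTG : IsSubtree T TG) {Tmap : C → Set V}
    (hTsub : ∀ u, IsSubtree T (Tmap u)) {D : ℕ}
    (hD : ∀ u : C, ∀ x ∈ TG ∩ Tmap u, ∀ y ∈ TG ∩ Tmap u, T.dist x y ≤ D)
    (hadj : ∀ u u', 𝒞.Adj u u' → (Tmap u ∩ Tmap u').Nonempty) {u v : C} {x y : V}
    (hx : x ∈ TG ∩ Tmap u) (hy : y ∈ TG ∩ Tmap v) :
    T.dist x y + 1 ≤ (𝒞.dist u v + 1) * (D + 1) := by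
  classical
  obtain ⟨q, hq⟩ := h𝒞.exists_walk_length_eq_dist u v
  obtain ⟨W, hW⟩ := exists_walk_support_subset_of_walk hT.connected hTsub hadj q hx.2 hy.2
  set γ := W.bypass
  have hγ : γ.length = T.dist x y := hT.length_eq_dist_of_isPath W.bypass_isPath
  have hγTG : ∀ j, γ.getVert j ∈ TG := fun j =>
    hTG.2 hx.1 hy.1 γ W.bypass_isPath _ (γ.getVert_mem_support j)
  calc T.dist x y + 1 ≤ #q.support.toFinset * (D + 1) := by
        rw [← hγ]
        refine succ_le_card_mul_of_forall_exists _ (fun j w => γ.getVert j ∈ Tmap w)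
          (fun j _ => ?_) fun w j k hjk hk hj hk' => ?_
        · obtain ⟨w, hw, h⟩ :=
            hW _ (W.support_bypass_subset_support (γ.getVert_mem_support j))
          exact ⟨w, List.mem_toFinset.2 hw, h⟩
        · rw [← γ.dist_getVert_eq_of_length_eq_dist hγ hjk hk]
          exact hD w _ ⟨hγTG j, hj⟩ _ ⟨hγTG k, hk'⟩
    _ ≤ (𝒞.dist u v + 1) * (D + 1) := by
        gcongr
        rw [← hq, ← q.length_support]
        exact List.toFinset_card_le _

section Action

variable {G : Type*} [Group G] [MulAction G V]

theorem Connected.dist_smul (hT : T.Connected)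
    (hact : ∀ (g : G) (u v : V), T.Adj u v → T.Adj (g • u) (g • v)) (g : G) (x y : V) :
    T.dist (g • x) (g • y) = T.dist x y :=
  le_antisymm ((hT x y).dist_map_le ⟨(g • ·), hact g _ _⟩)
    (by simpa using (hT (g • x) (g • y)).dist_map_le ⟨(g⁻¹ • ·), hact g⁻¹ _ _⟩)

variable (G T) in
def translatesGraph (A : Set V) : SimpleGraph V where
  Adj x y := T.Adj x y ∧ ∃ m : G, x ∈ m • A ∧ y ∈ m • A
  symm := ⟨fun _ _ h => ⟨h.1.symm, h.2.imp fun _ hm => hm.symm⟩⟩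
  loopless := ⟨fun _ h => T.irrefl h.1⟩

variable {A : Set V}

theorem translatesGraph_le : T.translatesGraph G A ≤ T := fun _ _ h => h.1

theorem translatesGraph_reachable_of_support_subset {x y : V} (p : T.Walk x y)
    (hp : ∀ z ∈ p.support, z ∈ A) : (T.translatesGraph G A).Reachable x y := by
  induction p with
  | nil => exact Reachable.refl _
  | cons h p ih =>
    refine Reachable.trans (Adj.reachable ⟨h, 1, ?_, ?_⟩) (ih fun z hz => hp z (by simp [hz]))
    · simpa using hp _ (by simp)
    · simpa using hp _ (by simp)

theorem translatesGraph_reachable_smul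
    (hact : ∀ (g : G) (u v : V), T.Adj u v → T.Adj (g • u) (g • v)) {x y : V}
    (h : (T.translatesGraph G A).Reachable x y) (g : G) :
    (T.translatesGraph G A).Reachable (g • x) (g • y) :=
  h.map ⟨(g • ·), fun {a b} hab => by
    obtain ⟨hab, m, ha, hb⟩ := hab
    exact ⟨hact g _ _ hab, g * m, by rw [mul_smul]; exact Set.smul_mem_smul_set ha,
      by rw [mul_smul]; exact Set.smul_mem_smul_set hb⟩⟩

theorem translatesGraph_reachable_smul_of_closure
    (hact : ∀ (g : G) (u v : V), T.Adj u v → T.Adj (g • u) (g • v)) {S : Set G}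
    (hgen : Subgroup.closure S = ⊤) {t : V}
    (hS : ∀ s ∈ S, (T.translatesGraph G A).Reachable t (s • t)) (g : G) :
    (T.translatesGraph G A).Reachable t (g • t) := by
  induction (hgen ▸ Subgroup.mem_top g : g ∈ Subgroup.closure S)
    using Subgroup.closure_induction with
  | mem s hs => exact hS s hs
  | one => simp
  | mul x y _ _ hx hy =>
    simpa [mul_smul] using hx.trans (translatesGraph_reachable_smul hact hy x)
  | inv x _ hx => simpa using (translatesGraph_reachable_smul hact hx x⁻¹).symm

theorem _root_.Set.Finite.setOf_exists_smul_mem (hA : A.Finite)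
    (hfree : ∀ g : G, ∀ a ∈ A, g • a = a → g = 1) : {g : G | ∃ a ∈ A, g • a ∈ A}.Finite := by
  refine (hA.biUnion fun a ha => hA.biUnion fun b _ =>
    Set.Subsingleton.finite (s := {g : G | g • a = b}) fun g₁ hg₁ g₂ hg₂ => ?_).subset ?_
  · have : (g₂⁻¹ * g₁) • a = a := by
      rw [mul_smul, hg₁.out, ← hg₂.out, inv_smul_smul]
    exact (inv_mul_eq_one.1 (hfree _ a ha this)).symm
  · rintro g ⟨a, ha, hga⟩
    exact Set.mem_biUnion ha (Set.mem_biUnion hga rfl)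

theorem wordLength_le_of_walk_translatesGraph {S : Finset G}
    (hgen : Subgroup.closure (S : Set G) = ⊤) {N : ℕ}
    (hN : ∀ h : G, ∀ a ∈ A, h • a ∈ A → wordLength S h ≤ N) {x y : V}
    (p : (T.translatesGraph G A).Walk x y) {k : G} (hx : x ∈ k • A) :
    ∃ k' : G, y ∈ k' • A ∧ wordLength S k' ≤ wordLength S k + N * p.length := by
  induction p generalizing k with
  | nil => exact ⟨k, hx, by simp⟩
  | cons h p ih =>
    obtain ⟨m, hxm, hzm⟩ := h.2
    obtain ⟨k', hy, hk'⟩ := ih hzm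
    have hm : wordLength S m ≤ wordLength S k + N := by
      obtain ⟨a, ha, rfl⟩ := Set.mem_smul_set.1 hx
      obtain ⟨b, hb, hmb⟩ := Set.mem_smul_set.1 hxm
      calc wordLength S m = wordLength S (k * (k⁻¹ * m)) := by rw [mul_inv_cancel_left]
        _ ≤ wordLength S k + wordLength S (k⁻¹ * m) := wordLength_mul_le hgen _ _
        _ ≤ wordLength S k + N := by
            gcongr
            exact hN _ b hb (by rwa [mul_smul, hmb, inv_smul_smul])
    refine ⟨k', hy, ?_⟩
    rw [Walk.length_cons, mul_add_one]
    omega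

theorem exists_wordLength_le_of_reachable_translatesGraph (hT : T.IsTree)
    (hact : ∀ (g : G) (u v : V), T.Adj u v → T.Adj (g • u) (g • v)) {S : Finset G}
    (hgen : Subgroup.closure (S : Set G) = ⊤) (hA : A.Finite)
    (hfree : ∀ g : G, ∀ a ∈ A, g • a = a → g = 1) {t : V} (htA : t ∈ A)
    (hS : ∀ s ∈ S, (T.translatesGraph G A).Reachable t (s • t)) :
    ∃ N : ℕ, ∀ g : G, wordLength S g ≤ N * (T.dist t (g • t) + 1) := by
  have hΦ := hA.setOf_exists_smul_mem hfree
  set N := hΦ.toFinset.sup (wordLength S)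
  have hN : ∀ h : G, ∀ a ∈ A, h • a ∈ A → wordLength S h ≤ N := fun h a ha hha =>
    le_sup (hΦ.mem_toFinset.2 ⟨a, ha, hha⟩)
  refine ⟨N, fun g => ?_⟩
  obtain ⟨p, hp, -⟩ :=
    (translatesGraph_reachable_smul_of_closure hact hgen hS g).exists_path_of_dist
  have hlen : p.length = T.dist t (g • t) := by
    rw [← p.length_mapLe translatesGraph_le, hT.length_eq_dist_of_isPath (hp.mapLe _)]
  obtain ⟨k, hk₁, hk⟩ :=
    wordLength_le_of_walk_translatesGraph hgen hN p (k := 1) (by simpa using htA)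
  obtain ⟨a, ha, hka⟩ := Set.mem_smul_set.1 hk₁
  calc wordLength S g = wordLength S (k * (k⁻¹ * g)) := by rw [mul_inv_cancel_left]
    _ ≤ wordLength S k + wordLength S (k⁻¹ * g) := wordLength_mul_le hgen _ _
    _ ≤ N * p.length + N := add_le_add (by simpa [wordLength_one] using hk)
        (hN _ t htA (by rwa [mul_smul, ← hka, inv_smul_smul]))
    _ = N * (T.dist t (g • t) + 1) := by rw [hlen, mul_add_one]

theorem exists_wordLength_le_dist_smul (hT : T.IsTree)
    (hact : ∀ (g : G) (u v : V), T.Adj u v → T.Adj (g • u) (g • v)) {S : Finset G}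
    (hgen : Subgroup.closure (S : Set G) = ⊤) {TG : Set V} (hTG : IsSubtree T TG)
    (hTGinv : ∀ g : G, ∀ v ∈ TG, g • v ∈ TG) (hfree : ∀ g : G, ∀ v ∈ TG, g • v = v → g = 1)
    {t : V} (ht : t ∈ TG) :
    ∃ N : ℕ, ∀ g : G, wordLength S g ≤ N * (T.dist t (g • t) + 1) := by
  choose P hP using fun s : G => hTG.exists_walk_support_subset hT.connected ht (hTGinv s t ht)
  set A : Set V := insert t (⋃ s ∈ S, {z | z ∈ (P s).support})
  have hATG : A ⊆ TG := Set.insert_subset ht (Set.iUnion₂_subset fun s _ z hz => hP s z hz)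
  exact exists_wordLength_le_of_reachable_translatesGraph hT hact hgen
    ((S.finite_toSet.biUnion fun s _ => (P s).support.finite_toSet).insert t)
    (fun g a ha => hfree g a (hATG ha)) (Set.mem_insert t _) fun s hs =>
      translatesGraph_reachable_of_support_subset (P s) fun z hz =>
        Or.inr (Set.mem_biUnion hs hz)

end Action

end SimpleGraph

theorem stmt15_general {G V C : Type*} [Group G] [MulAction G V] [MulAction G C]
    (T : SimpleGraph V) (hT : T.IsTree)
    (hactT : ∀ (g : G) (u v : V), T.Adj u v → T.Adj (g • u) (g • v))
    (𝒞 : SimpleGraph C) (h𝒞conn : 𝒞.Connected)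
    (hact𝒞 : ∀ (g : G) (u v : C), 𝒞.Adj u v → 𝒞.Adj (g • u) (g • v))
    (TG : Set V) (hTG : IsSubtree T TG)
    (hTGinv : ∀ g : G, (g • ·) '' TG = TG)
    (hfree : ∀ (g : G) (v : V), v ∈ TG → g • v = v → g = 1)
    (Tmap : C → Set V) (hTsub : ∀ u : C, IsSubtree T (Tmap u))
    (hequiv : ∀ (g : G) (u : C), Tmap (g • u) = (g • ·) '' Tmap u)
    (D : ℕ)
    (hD : ∀ u : C, ∀ x ∈ TG ∩ Tmap u, ∀ y ∈ TG ∩ Tmap u, T.dist x y ≤ D)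
    (hadj : ∀ u u' : C, 𝒞.Adj u u' → (Tmap u ∩ Tmap u').Nonempty)
    (u₀ : C) (t : V) (ht : t ∈ TG ∩ Tmap u₀)
    (S : Finset G) (hgen : Subgroup.closure (S : Set G) = ⊤) :
    ∃ K c : ℝ, 0 < K ∧ 0 ≤ c ∧ ∀ g : G,
      (wordLength S g : ℝ) ≤ K * (𝒞.dist u₀ (g • u₀) : ℝ) + c ∧
      (𝒞.dist u₀ (g • u₀) : ℝ) ≤ K * (wordLength S g : ℝ) + c := by
  have hTGsmul : ∀ g : G, ∀ v ∈ TG, g • v ∈ TG := fun g v hv => hTGinv g ▸ ⟨v, hv, rfl⟩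
  obtain ⟨N, hN⟩ := exists_wordLength_le_dist_smul hT hactT hgen hTG hTGsmul hfree ht.1
  obtain ⟨M, hM⟩ := exists_le_mul_wordLength hgen (φ := fun g => 𝒞.dist u₀ (g • u₀))
    (by simp) (fun x y => h𝒞conn.dist_triangle.trans_eq
      (by rw [mul_smul, h𝒞conn.dist_smul hact𝒞]))
    (fun x => by rw [← h𝒞conn.dist_smul hact𝒞 x, smul_inv_smul, dist_comm])
  have hdist (g : G) : T.dist t (g • t) + 1 ≤ (𝒞.dist u₀ (g • u₀) + 1) * (D + 1) :=
    dist_add_one_le_of_mem_inter hT h𝒞conn hTG hTsub hD hadj ht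
      ⟨hTGsmul g t ht.1, hequiv g u₀ ▸ ⟨t, ht.2, rfl⟩⟩
  refine ⟨N * (D + 1) + M + 1, N * (D + 1) + M + 1, by positivity, by positivity, fun g => ?_⟩
  have hlower := (hN g).trans (Nat.mul_le_mul_left N (hdist g))
  constructor
  · exact_mod_cast hlower.trans (by nlinarith)
  · exact_mod_cast (hM g).trans (by nlinarith)

/-- Suppose a finitely generated group `G` acts on a tree `T`, freely and
cocompactly on an invariant subtree `T_G`, there is a `G`-equivariant assignment
`u ↦ T_u` of subtrees to the vertices of a connected graph `𝒞` with `G`-action such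
that `diam(T_G ∩ T_u) ≤ D` for all `u`, adjacent vertices of `𝒞` have intersecting
subtrees, and a basepoint `t ∈ T_G ∩ T_{u₀}` has `G`-orbit coarsely equal to `T_G`.
Then the orbit map `g ↦ g·u₀` is a quasi-isometric embedding of `G` into `𝒞`. -/
theorem stmt15 {G V C : Type*} [Group G] [MulAction G V] [MulAction G C]
    (T : SimpleGraph V) (hT : T.IsTree)
    (hactT : ∀ (g : G) (u v : V), T.Adj u v → T.Adj (g • u) (g • v))
    (𝒞 : SimpleGraph C) (h𝒞conn : 𝒞.Connected)
    (hact𝒞 : ∀ (g : G) (u v : C), 𝒞.Adj u v → 𝒞.Adj (g • u) (g • v))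
    (TG : Set V) (hTG : IsSubtree T TG)
    (hTGinv : ∀ g : G, (g • ·) '' TG = TG)
    (hfree : ∀ (g : G) (v : V), v ∈ TG → g • v = v → g = 1)
    (F : Finset V) (hcocpt : ∀ v ∈ TG, ∃ g : G, g • v ∈ F)
    (Tmap : C → Set V) (hTsub : ∀ u : C, IsSubtree T (Tmap u))
    (hequiv : ∀ (g : G) (u : C), Tmap (g • u) = (g • ·) '' Tmap u)
    (D : ℕ)
    (hD : ∀ u : C, ∀ x ∈ TG ∩ Tmap u, ∀ y ∈ TG ∩ Tmap u, T.dist x y ≤ D)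
    (hadj : ∀ u u' : C, 𝒞.Adj u u' → (Tmap u ∩ Tmap u').Nonempty)
    (u₀ : C) (t : V) (ht : t ∈ TG ∩ Tmap u₀)
    (R : ℕ) (hcoarse : ∀ x ∈ TG, ∃ g : G, T.dist x (g • t) ≤ R)
    (S : Finset G) (hgen : Subgroup.closure (S : Set G) = ⊤) :
    ∃ K c : ℝ, 0 < K ∧ 0 ≤ c ∧ ∀ g : G,
      (wordLength S g : ℝ) ≤ K * (𝒞.dist u₀ (g • u₀) : ℝ) + c ∧
      (𝒞.dist u₀ (g • u₀) : ℝ) ≤ K * (wordLength S g : ℝ) + c :=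
  stmt15_general T hT hactT 𝒞 h𝒞conn hact𝒞 TG hTG hTGinv hfree Tmap hTsub hequiv D hD hadj u₀ t ht S
    hgen
end

section
/- Let u ⊆ w be simplices of a simplicial complex 𝒞 on which a group Γ₀ acts, with stabilizers K_u ≥ K_w acting by isometries on a tree T, and for each simplex x let T_x be the minimal K_x-invariant subtree if K_x has no global fixed point, and the maximal fixed subtree otherwise. Assume that whenever K_x has a global fixed point its maximal fixed subtree is a single vertex or a single edge, and is the full fixed set of some element of K_x. Then T_u ∩ T_w ≠ ∅. -/
/-!
If `K_w` has no global fixed point, neither has `K_u ≥ K_w`, and `T_u` is a `K_w`-invariant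
subtree, so it contains the minimal one `T_w`. If both have fixed points, `T_u = Fix K_u` lies in
`Fix K_w = T_w`. In the mixed case `T_w = Fix γ` for some elliptic `γ ∈ K_w`, which preserves
`T_u`; the point of `T_u` nearest to a fixed point of `γ` is unique, hence fixed by `γ`.
-/

open Pointwise

/-- The subtree associated to a subgroup `K` acting on a tree: the maximal fixed
subtree (the fixed point set) if `K` has a global fixed point, and the minimal
`K`-invariant subtree otherwise. -/
def IsAssocSubtree {V Γ : Type*} [Group Γ] [MulAction Γ V]
    (T : SimpleGraph V) (K : Subgroup Γ) (S : Set V) : Prop :=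
  ({v : V | ∀ γ ∈ K, γ • v = v}.Nonempty → S = {v : V | ∀ γ ∈ K, γ • v = v}) ∧
  (¬ {v : V | ∀ γ ∈ K, γ • v = v}.Nonempty →
    IsSubtree T S ∧ (∀ γ ∈ K, (γ • ·) '' S = S) ∧
    ∀ S' : Set V, IsSubtree T S' → (∀ γ ∈ K, (γ • ·) '' S' = S') → S ⊆ S')

namespace SimpleGraph

variable {V : Type*} {G : SimpleGraph V}

lemma Walk.dist_lt_of_mem_support {u v x : V} (P : G.Walk u v) (hP : P.length = G.dist u v)
    (hx : x ∈ P.support) (hxv : x ≠ v) : G.dist u x < G.dist u v := by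
  classical
  exact (dist_le (P.takeUntil x hx)).trans_lt (hP ▸ P.length_takeUntil_lt_length hx hxv)

lemma Connected.dist_smul_s17 {Γ : Type*} [Group Γ] [MulAction Γ V] (hG : G.Connected)
    (hact : ∀ (γ : Γ) (u v : V), G.Adj u v → G.Adj (γ • u) (γ • v)) (γ : Γ) (x y : V) :
    G.dist (γ • x) (γ • y) = G.dist x y := by
  have dist_smul_le (δ : Γ) (x y : V) : G.dist (δ • x) (δ • y) ≤ G.dist x y := by
    obtain ⟨W, hW⟩ := hG.exists_walk_length_eq_dist x y
    have := dist_le (W.map ⟨(δ • ·), fun hxy => hact δ _ _ hxy⟩)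
    rwa [Walk.length_map, hW] at this
  refine (dist_smul_le γ x y).antisymm ?_
  simpa only [inv_smul_smul] using dist_smul_le γ⁻¹ (γ • x) (γ • y)

end SimpleGraph

open SimpleGraph

section Subtree

variable {V : Type*} {T : SimpleGraph V} {S : Set V}

theorem IsSubtree.eq_of_dist_eq_of_forall_dist_le (hT : T.IsTree) (hS : IsSubtree T S)
    {p q q' : V} (hq : q ∈ S) (hq' : q' ∈ S) (hmin : ∀ s ∈ S, T.dist p q ≤ T.dist p s)
    (hdist : T.dist p q' = T.dist p q) : q' = q := by
  classical
  by_contra hne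
  obtain ⟨P, -, hP⟩ := hT.connected.exists_path_of_dist p q
  obtain ⟨P', -, hP'⟩ := hT.connected.exists_path_of_dist p q'
  have hPS : ∀ x ∈ P.support, x ∈ S → x = q := fun x hx hxS =>
    by_contra fun hxq => (hmin x hxS).not_gt (P.dist_lt_of_mem_support hP hx hxq)
  have hP'S : ∀ x ∈ P'.support, x ∈ S → x = q' := fun x hx hxS =>
    by_contra fun hxq => (hdist ▸ hmin x hxS).not_gt (P'.dist_lt_of_mem_support hP' hx hxq)
  -- The path from `q` to `q'` runs inside `S` and along `P` and `P'`, so its second vertex is `q'`.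
  set Q := (P.reverse.append P').bypass
  have hQnil : ¬ Q.Nil := Walk.not_nil_of_ne (Ne.symm hne)
  have hsndS : Q.snd ∈ S := hS.2 hq hq' Q (Walk.bypass_isPath _) _ (Q.getVert_mem_support 1)
  have hsnd : Q.snd ∈ P.support ∨ Q.snd ∈ P'.support := by
    have := Walk.support_bypass_subset_support _ (Q.getVert_mem_support 1)
    simp only [Walk.support_append, Walk.support_reverse, List.mem_append,
      List.mem_reverse] at this
    exact this.imp_right List.mem_of_mem_tail
  have hadj : T.Adj q Q.snd := Q.adj_snd hQnil
  rcases hsnd with h | h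
  · exact hadj.ne (hPS _ h hsndS).symm
  · rw [hP'S _ h hsndS] at hadj
    exact hT.dist_ne_of_adj p hadj hdist.symm

theorem IsSubtree.exists_smul_eq_self_mem {Γ : Type*} [Group Γ] [MulAction Γ V]
    (hT : T.IsTree) (hact : ∀ (γ : Γ) (u v : V), T.Adj u v → T.Adj (γ • u) (γ • v))
    (hS : IsSubtree T S) {γ : Γ} (hγS : (γ • ·) '' S = S) {p : V} (hp : γ • p = p) :
    ∃ q ∈ S, γ • q = q := by
  set q := Function.argminOn (T.dist p) S hS.1
  have hq : q ∈ S := Function.argminOn_mem _ _ _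
  have hγq : γ • q ∈ S := hγS ▸ Set.mem_image_of_mem _ hq
  refine ⟨q, hq, hS.eq_of_dist_eq_of_forall_dist_le hT hq hγq
    (fun s hs => Function.argminOn_le _ _ hs) ?_⟩
  calc T.dist p (γ • q) = T.dist (γ • p) (γ • q) := by rw [hp]
    _ = T.dist p q := hT.connected.dist_smul_s17 hact γ p q

end Subtree

theorem stmt17_general {X Γ V : Type*} [Group Γ]
    [MulAction Γ V]
    (T : SimpleGraph V) (hT : T.IsTree)
    (hact : ∀ (γ : Γ) (u v : V), T.Adj u v → T.Adj (γ • u) (γ • v))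
    (u : Finset X)
    (Ku Kw : Subgroup Γ)
    (hle : Kw ≤ Ku)
    (Tu Tw : Set V)
    (hTu : IsAssocSubtree T Ku Tu) (hTw : IsAssocSubtree T Kw Tw)
    (hfixKw : {v : V | ∀ γ ∈ Kw, γ • v = v}.Nonempty →
      ((∃ a, {v : V | ∀ γ ∈ Kw, γ • v = v} = {a}) ∨
        (∃ a b, T.Adj a b ∧ {v : V | ∀ γ ∈ Kw, γ • v = v} = {a, b})) ∧
      ∃ γ ∈ Kw, {v : V | γ • v = v} = {v : V | ∀ γ' ∈ Kw, γ' • v = v}) :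
    (Tu ∩ Tw).Nonempty := by
  have hfix_mono : {v : V | ∀ γ ∈ Ku, γ • v = v} ⊆ {v : V | ∀ γ ∈ Kw, γ • v = v} :=
    fun v hv γ hγ => hv γ (hle hγ)
  by_cases hW : {v : V | ∀ γ ∈ Kw, γ • v = v}.Nonempty
  · rw [hTw.1 hW]
    by_cases hU : {v : V | ∀ γ ∈ Ku, γ • v = v}.Nonempty
    · rwa [hTu.1 hU, Set.inter_eq_left.mpr hfix_mono]
    · obtain ⟨hSu, hInvU, -⟩ := hTu.2 hU
      obtain ⟨-, γ, hγ, hγfix⟩ := hfixKw hW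
      obtain ⟨p, hp⟩ := hW
      rw [← hγfix] at hp ⊢
      exact hSu.exists_smul_eq_self_mem hT hact (hInvU γ (hle hγ)) hp
  · have hU : ¬ {v : V | ∀ γ ∈ Ku, γ • v = v}.Nonempty := fun h => hW (h.mono hfix_mono)
    obtain ⟨hSu, hInvU, -⟩ := hTu.2 hU
    obtain ⟨hSw, -, hmin⟩ := hTw.2 hW
    rw [Set.inter_eq_right.mpr (hmin Tu hSu fun γ hγ => hInvU γ (hle hγ))]
    exact hSw.1

/-- Let `u ⊆ w` be simplices of a simplicial complex with a `Γ`-action,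
with (setwise) stabilizers `K_w ≤ K_u` acting by automorphisms on a tree `T`, and
let `T_u, T_w` be the associated subtrees (minimal invariant subtree when there is no
global fixed point, maximal fixed subtree otherwise).  Assume that whenever one of
`K_u, K_w` has a global fixed point, its maximal fixed subtree is a single vertex or
a single edge and is the full fixed point set of some element of the group.  Then
`T_u ∩ T_w ≠ ∅`. -/
theorem stmt17 {X Γ V : Type*} [Group Γ] [DecidableEq X] [MulAction Γ X]
    [MulAction Γ V]
    (T : SimpleGraph V) (hT : T.IsTree)
    (hact : ∀ (γ : Γ) (u v : V), T.Adj u v → T.Adj (γ • u) (γ • v))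
    (u w : Finset X) (huw : u ⊆ w)
    (Ku Kw : Subgroup Γ)
    (hKu : Ku = MulAction.stabilizer Γ u) (hKw : Kw = MulAction.stabilizer Γ w)
    (hle : Kw ≤ Ku)
    (Tu Tw : Set V)
    (hTu : IsAssocSubtree T Ku Tu) (hTw : IsAssocSubtree T Kw Tw)
    (hTune : Tu.Nonempty) (hTwne : Tw.Nonempty)
    (hfixKu : {v : V | ∀ γ ∈ Ku, γ • v = v}.Nonempty →
      ((∃ a, {v : V | ∀ γ ∈ Ku, γ • v = v} = {a}) ∨
        (∃ a b, T.Adj a b ∧ {v : V | ∀ γ ∈ Ku, γ • v = v} = {a, b})) ∧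
      ∃ γ ∈ Ku, {v : V | γ • v = v} = {v : V | ∀ γ' ∈ Ku, γ' • v = v})
    (hfixKw : {v : V | ∀ γ ∈ Kw, γ • v = v}.Nonempty →
      ((∃ a, {v : V | ∀ γ ∈ Kw, γ • v = v} = {a}) ∨
        (∃ a b, T.Adj a b ∧ {v : V | ∀ γ ∈ Kw, γ • v = v} = {a, b})) ∧
      ∃ γ ∈ Kw, {v : V | γ • v = v} = {v : V | ∀ γ' ∈ Kw, γ' • v = v}) :
    (Tu ∩ Tw).Nonempty :=
  stmt17_general T hT hact u Ku Kw hle Tu Tw hTu hTw hfixKw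
end
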